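/- Every entire function θ : ℂ → ℂ such that θ′(0) = 1, the zero set of θ is exactly L, θ(z+1) = −θ(z) for all z, and θ(z+τ) = −e^{−iπτ} e^{−2iπz} θ(z) for all z, is odd: θ(−z) = −θ(z) for all z ∈ ℂ. -/

import Mathlib

noncomputable section
open Complex Matrix Kronecker

/-- The lattice `L = ℤ + τℤ`. -/
def LatSet (τ : ℂ) : Set ℂ := {z | ∃ m n : ℤ, z = (m : ℂ) + (n : ℂ) * τ}

/-- `θ` is the theta function of the paper: entire, `θ′(0) = 1`, zero set exactly `L`,
`θ(z+1) = −θ(z)` and `θ(z+τ) = −e^{−iπτ} e^{−2iπz} θ(z)`. -/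
def IsTheta (τ : ℂ) (θ : ℂ → ℂ) : Prop :=
  Differentiable ℂ θ ∧ deriv θ 0 = 1 ∧ (∀ z, θ z = 0 ↔ z ∈ LatSet τ) ∧
    (∀ z, θ (z + 1) = -θ z) ∧
    (∀ z, θ (z + τ) = -Complex.exp (-((Real.pi : ℂ) * Complex.I * τ)) *
      Complex.exp (-(2 * (Real.pi : ℂ) * Complex.I * z)) * θ z)

/-- The automorphy factor. -/
def thetaU (τ : ℂ) (z : ℂ) : ℂ :=
  -Complex.exp (-((Real.pi : ℂ) * Complex.I * τ)) *
    Complex.exp (-(2 * (Real.pi : ℂ) * Complex.I * z))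

lemma thetaU_ne_zero (τ z : ℂ) : thetaU τ z ≠ 0 := by
  simp [thetaU, Complex.exp_ne_zero]

lemma thetaU_mul (τ z : ℂ) : thetaU τ (-z - τ) * thetaU τ z = 1 := by
  unfold thetaU
  rw [mul_mul_mul_comm, neg_mul_neg, ← Complex.exp_add, ← Complex.exp_add, ← Complex.exp_add]
  rw [show -((Real.pi : ℂ) * Complex.I * τ) + -((Real.pi : ℂ) * Complex.I * τ) +
      (-(2 * (Real.pi : ℂ) * Complex.I * (-z - τ)) + -(2 * (Real.pi : ℂ) * Complex.I * z)) = 0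
    by ring, Complex.exp_zero]

/-- The theta function is odd: `θ(−z) = −θ(z)`. -/
theorem theta_odd
    (τ : ℂ) (hτ : 0 < τ.im) (θ : ℂ → ℂ) (hθ : IsTheta τ θ) :
    ∀ z : ℂ, θ (-z) = -θ z := by
  obtain ⟨hdiff, hderiv, hzero, h1, hq⟩ := hθ
  have hq' : ∀ z, θ (z + τ) = thetaU τ z * θ z := hq
  -- basic lattice facts
  have lat0 : (0 : ℂ) ∈ LatSet τ := ⟨0, 0, by simp⟩
  have latneg : ∀ z : ℂ, z ∈ LatSet τ → -z ∈ LatSet τ := by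
    rintro z ⟨m, n, rfl⟩; exact ⟨-m, -n, by push_cast; ring⟩
  have θ0 : θ 0 = 0 := (hzero 0).2 lat0
  -- the symmetrized function H
  set H : ℂ → ℂ := fun z => θ (-z) + θ z with hHdef
  have Hdiff : Differentiable ℂ H :=
    (hdiff.comp differentiable_neg).add hdiff
  have H0 : H 0 = 0 := by simp [hHdef, θ0]
  have derivH0 : deriv H 0 = 0 := by
    have : deriv H 0 = deriv (fun z => θ (-z)) 0 + deriv θ 0 := by
      rw [hHdef]
      exact deriv_add ((hdiff.comp differentiable_neg).differentiableAt) hdiff.differentiableAt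
    rw [this, deriv_comp_neg, neg_zero, hderiv]; ring
  -- functional equations for H
  have θneg1 : ∀ z, θ (-z - 1) = -θ (-z) := by
    intro z
    have := h1 (-z - 1)
    rw [show -z - 1 + 1 = -z by ring] at this
    rw [eq_neg_iff_add_eq_zero] at this ⊢
    linear_combination this
  have H1 : ∀ z, H (z + 1) = -H z := by
    intro z
    simp only [hHdef]
    rw [show -(z + 1) = -z - 1 by ring, θneg1, h1]
    ring
  have θnegτ : ∀ z, θ (-z - τ) = thetaU τ z * θ (-z) := by
    intro z
    have h := hq' (-z - τ)
    rw [show -z - τ + τ = -z by ring] at h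
    calc θ (-z - τ) = 1 * θ (-z - τ) := (one_mul _).symm
      _ = (thetaU τ z * thetaU τ (-z - τ)) * θ (-z - τ) := by
          rw [mul_comm (thetaU τ z), thetaU_mul]
      _ = thetaU τ z * (thetaU τ (-z - τ) * θ (-z - τ)) := by ring
      _ = thetaU τ z * θ (-z) := by rw [← h]
  have Hτ : ∀ z, H (z + τ) = thetaU τ z * H z := by
    intro z
    simp only [hHdef]
    rw [show -(z + τ) = -z - τ by ring, θnegτ, hq' z]
    ring
  -- the quotient g
  set g : ℂ → ℂ := fun z => H z / θ z with hgdef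
  have g1 : ∀ z, g (z + 1) = g z := by
    intro z; simp only [hgdef]; rw [H1, h1, neg_div_neg_eq]
  have gτ : ∀ z, g (z + τ) = g z := by
    intro z; simp only [hgdef]; rw [Hτ, hq' z, mul_div_mul_left _ _ (thetaU_ne_zero τ z)]
  -- integer periodicity
  have gm : ∀ (m : ℤ) (z : ℂ), g (z + m) = g z := by
    intro m
    induction m using Int.induction_on with
    | zero => simp
    | succ k ih =>
        intro z
        have e : z + (((k : ℤ) + 1 : ℤ) : ℂ) = z + ((k : ℤ) : ℂ) + 1 := by push_cast; ring
        rw [e, g1, ih]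
    | pred k ih =>
        intro z
        have h := g1 (z + ((-(k : ℤ) - 1 : ℤ) : ℂ))
        have e : z + ((-(k : ℤ) - 1 : ℤ) : ℂ) + 1 = z + ((-(k : ℤ) : ℤ) : ℂ) := by
          push_cast; ring
        rw [e] at h
        exact h.symm.trans (ih z)
  have gn : ∀ (n : ℤ) (z : ℂ), g (z + n * τ) = g z := by
    intro n
    induction n using Int.induction_on with
    | zero => simp
    | succ k ih =>
        intro z
        have e : z + (((k : ℤ) + 1 : ℤ) : ℂ) * τ = z + ((k : ℤ) : ℂ) * τ + τ := by
          push_cast; ring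
        rw [e, gτ, ih]
    | pred k ih =>
        intro z
        have h := gτ (z + ((-(k : ℤ) - 1 : ℤ) : ℂ) * τ)
        have e : z + ((-(k : ℤ) - 1 : ℤ) : ℂ) * τ + τ = z + ((-(k : ℤ) : ℤ) : ℂ) * τ := by
          push_cast; ring
        rw [e] at h
        exact h.symm.trans (ih z)
  have gper : ∀ (z : ℂ) (m n : ℤ), g (z + ((m : ℂ) + (n : ℂ) * τ)) = g z := by
    intro z m n
    rw [show z + ((m : ℂ) + (n : ℂ) * τ) = z + m + (n : ℂ) * τ by ring, gn, gm]
  -- differentiability of g at 0 via dslope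
  have hana : ∀ f : ℂ → ℂ, Differentiable ℂ f → AnalyticAt ℂ (dslope f 0) 0 := by
    intro f hf
    obtain ⟨p, hp⟩ := hf.analyticAt 0
    exact ⟨_, hp.has_fpower_series_dslope_fslope⟩
  have dθana := hana θ hdiff
  have dHana := hana H Hdiff
  have dθ0 : dslope θ 0 0 = 1 := by rw [dslope_same, hderiv]
  have dθne : ∀ᶠ z in nhds (0 : ℂ), dslope θ 0 z ≠ 0 :=
    dθana.continuousAt.eventually_ne (by rw [dθ0]; exact one_ne_zero)
  have qdiff : DifferentiableAt ℂ (fun z => dslope H 0 z / dslope θ 0 z) 0 :=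
    (dHana.differentiableAt).div (dθana.differentiableAt) (by rw [dθ0]; exact one_ne_zero)
  have geq : g =ᶠ[nhds (0 : ℂ)] fun z => dslope H 0 z / dslope θ 0 z := by
    filter_upwards [dθne] with z hz
    rcases eq_or_ne z 0 with rfl | hz0
    · show H 0 / θ 0 = dslope H 0 0 / dslope θ 0 0
      rw [dslope_same, dslope_same, θ0, H0, derivH0, hderiv]
      simp
    · show H z / θ z = dslope H 0 z / dslope θ 0 z
      rw [dslope_of_ne _ hz0, dslope_of_ne _ hz0, slope_def_field, slope_def_field,
        θ0, H0, sub_zero, sub_zero, sub_zero]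
      exact (div_div_div_cancel_right₀ hz0 (H z) (θ z)).symm
  have gdiff0 : DifferentiableAt ℂ g 0 := qdiff.congr_of_eventuallyEq geq
  -- differentiability of g everywhere
  have gdiff : Differentiable ℂ g := by
    intro z
    by_cases hz : θ z = 0
    · obtain ⟨m, n, rfl⟩ := (hzero z).1 hz
      have hfe : g = fun w => g (w - ((m : ℂ) + (n : ℂ) * τ)) := by
        funext w
        rw [← gper (w - ((m : ℂ) + (n : ℂ) * τ)) m n, sub_add_cancel]
      rw [hfe]
      have hsub : DifferentiableAt ℂ (fun w : ℂ => w - ((m : ℂ) + (n : ℂ) * τ))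
          ((m : ℂ) + (n : ℂ) * τ) := (differentiable_id.sub_const _).differentiableAt
      have h0 : (fun w : ℂ => w - ((m : ℂ) + (n : ℂ) * τ)) ((m : ℂ) + (n : ℂ) * τ) = 0 := by
        simp
      exact DifferentiableAt.comp _ (h0 ▸ gdiff0) hsub
    · exact (Hdiff.differentiableAt).div (hdiff.differentiableAt) hz
  -- boundedness via the fundamental domain
  have gcont : Continuous g := gdiff.continuous
  set K : Set ℂ := (fun p : ℝ × ℝ => (p.1 : ℂ) + (p.2 : ℂ) * τ) '' (Set.Icc 0 1 ×ˢ Set.Icc 0 1)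
    with hKdef
  have hKcomp : IsCompact K := by
    apply (isCompact_Icc.prod isCompact_Icc).image
    exact (Complex.continuous_ofReal.comp continuous_fst).add
      ((Complex.continuous_ofReal.comp continuous_snd).mul continuous_const)
  have hrange : Set.range g ⊆ g '' K := by
    rintro w ⟨z, rfl⟩
    set y : ℝ := z.im / τ.im with hy
    set x : ℝ := z.re - y * τ.re with hx
    have hτim : τ.im ≠ 0 := ne_of_gt hτ
    have hz : z = (x : ℂ) + (y : ℂ) * τ := by
      apply Complex.ext
      · simp [hx]
      · simp [hy]
        field_simp
    refine ⟨((Int.fract x : ℝ) : ℂ) + ((Int.fract y : ℝ) : ℂ) * τ, ⟨(Int.fract x, Int.fract y),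
      ⟨⟨Int.fract_nonneg x, (Int.fract_lt_one x).le⟩,
       ⟨Int.fract_nonneg y, (Int.fract_lt_one y).le⟩⟩, rfl⟩, ?_⟩
    have hp := gper (((Int.fract x : ℝ) : ℂ) + ((Int.fract y : ℝ) : ℂ) * τ) ⌊x⌋ ⌊y⌋
    rw [← hp, hz]
    congr 1
    rw [← Int.self_sub_floor x, ← Int.self_sub_floor y]
    push_cast
    ring
  have hbdd : Bornology.IsBounded (Set.range g) :=
    ((hKcomp.image gcont).isBounded).subset hrange
  -- Liouville
  have gconst : ∀ z, g z = g 0 := fun z => gdiff.apply_eq_apply_of_bounded hbdd z 0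
  have g0 : g 0 = 0 := by simp [hgdef, θ0]
  -- conclusion
  intro z
  by_cases hz : θ z = 0
  · have h1' : θ (-z) = 0 := (hzero _).2 (latneg z ((hzero z).1 hz))
    rw [h1', hz, neg_zero]
  · have hHz : H z = 0 := by
      have hgz := (gconst z).trans g0
      simp only [hgdef] at hgz
      exact (div_eq_zero_iff.1 hgz).resolve_right hz
    have : θ (-z) + θ z = 0 := hHz
    linear_combination this
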